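/- Finite-dimensional version of the pinching lemma: if h is a fully symmetric 3-tensor on an m-dimensional real inner product space with trace 1-form H_i = Σ_k h_{ikk}, then Σ_{ijk} h_{ijk}² ≥ (3/(m+2)) Σ_i H_i². -/
import Mathlib


open scoped BigOperators

/-- Finite-dimensional pinching lemma: a fully symmetric 3-tensor `h` on `ℝᵐ` with
trace one-form `H_i = Σ_k h_{ikk}` satisfies `Σ h_{ijk}² ≥ (3/(m+2)) Σ H_i²`. -/
theorem stmt2 {m : ℕ}
    (h : Fin m → Fin m → Fin m → ℝ)
    (hsymm : ∀ i j k, h i j k = h j i k ∧ h i j k = h i k j)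
    (H : Fin m → ℝ) (hH : ∀ i, H i = ∑ k, h i k k) :
    (3 / ((m : ℝ) + 2)) * ∑ i, (H i) ^ 2 ≤ ∑ i, ∑ j, ∑ k, (h i j k) ^ 2 := by
  have hm : (0:ℝ) < (m:ℝ) + 2 := by positivity
  set c : ℝ := 1/((m:ℝ)+2) with hc
  set F : Fin m → Fin m → Fin m → ℝ :=
    fun i j k => (if j = k then H i else 0) + (if i = k then H j else 0)
      + (if i = j then H k else 0) with hF
  have htr1 : ∀ i, ∑ j, h i j j = H i := fun i => (hH i).symm
  have htr2 : ∀ j, ∑ i, h i j i = H j := by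
    intro j; rw [hH]
    exact Finset.sum_congr rfl fun i _ => (hsymm i j i).1
  have htr3 : ∀ k, ∑ i, h i i k = H k := by
    intro k; rw [hH]
    refine Finset.sum_congr rfl fun i _ => ?_
    rw [(hsymm i i k).2, (hsymm i k i).1]
  have hHF : ∑ i, ∑ j, ∑ k, h i j k * F i j k = 3 * ∑ i, (H i)^2 := by
    have e1 : ∀ i j k, h i j k * F i j k
        = (if j = k then h i j k * H i else 0) + (if i = k then h i j k * H j else 0)
          + (if i = j then h i j k * H k else 0) := by
      intro i j k; simp only [hF]; split_ifs <;> ring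
    have T1 : ∑ i, ∑ j, h i j j * H i = ∑ i, (H i)^2 :=
      Finset.sum_congr rfl fun i _ => by rw [← Finset.sum_mul, htr1, sq]
    have T2 : ∑ i : Fin m, ∑ j, h i j i * H j = ∑ i, (H i)^2 := by
      rw [Finset.sum_comm]
      exact Finset.sum_congr rfl fun j _ => by rw [← Finset.sum_mul, htr2, sq]
    have T3 : ∑ i : Fin m, ∑ j, ∑ k, (if i = j then h i j k * H k else 0)
        = ∑ i, (H i)^2 := by
      simp only [Finset.sum_ite_irrel, Finset.sum_const_zero, Finset.sum_ite_eq,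
        Finset.mem_univ, if_true]
      rw [Finset.sum_comm]
      exact Finset.sum_congr rfl fun k _ => by rw [← Finset.sum_mul, htr3, sq]
    simp only [e1, Finset.sum_add_distrib, Finset.sum_ite_eq, Finset.mem_univ, if_true]
    rw [T1, T2, T3]; ring
  have hF2 : ∑ i, ∑ j, ∑ k, (F i j k)^2 = (3*(m:ℝ)+6) * ∑ i, (H i)^2 := by
    have e2 : ∀ i j k, (F i j k)^2
        = (if j = k then (H i)^2 else 0) + (if i = k then (H j)^2 else 0)
          + (if i = j then (H k)^2 else 0)
          + 2*(if j = k then (if i = k then H i * H j else 0) else 0)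
          + 2*(if j = k then (if i = j then H i * H k else 0) else 0)
          + 2*(if i = k then (if i = j then H j * H k else 0) else 0) := by
      intro i j k; simp only [hF]; split_ifs <;> ring
    simp only [e2, Finset.sum_add_distrib, ← Finset.mul_sum, Finset.sum_ite_irrel,
      Finset.sum_const_zero, Finset.sum_ite_eq, Finset.mem_univ, if_true,
      Finset.sum_const, Finset.card_univ, Fintype.card_fin, nsmul_eq_mul]
    simp only [← pow_two]; ring
  have hpos : (0:ℝ) ≤ ∑ i, ∑ j, ∑ k, (h i j k - c * F i j k)^2 :=
    Finset.sum_nonneg fun i _ => Finset.sum_nonneg fun j _ =>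
      Finset.sum_nonneg fun k _ => sq_nonneg _
  have hexp : ∑ i, ∑ j, ∑ k, (h i j k - c * F i j k)^2
      = (∑ i, ∑ j, ∑ k, (h i j k)^2)
        - 2*c*(∑ i, ∑ j, ∑ k, h i j k * F i j k)
        + c^2 * (∑ i, ∑ j, ∑ k, (F i j k)^2) := by
    have e3 : ∀ i j k, (h i j k - c * F i j k)^2
        = (h i j k)^2 - 2*c*(h i j k * F i j k) + c^2*(F i j k)^2 := by
      intro i j k; ring
    simp only [e3, Finset.sum_add_distrib, Finset.sum_sub_distrib, ← Finset.mul_sum]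
  rw [hexp, hHF, hF2] at hpos
  have hc2 : c * ((m:ℝ)+2) = 1 := by rw [hc]; field_simp
  have h1 : c^2 * (3*(m:ℝ)+6) = 3*c := by linear_combination 3*c*hc2
  have h3 : c^2 * ((3*(m:ℝ)+6) * ∑ i, (H i)^2) = 3*c*∑ i, (H i)^2 := by
    linear_combination (∑ i, (H i)^2) * h1
  have h2 : 3/((m:ℝ)+2) = 3*c := by rw [hc]; ring
  rw [h2]
  linarith [hpos, h3]
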